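/- Let R be an integral domain over a field k of characteristic zero, δ a locally nilpotent derivation of R, and f, g ∈ R such that f divides δ(g) and g divides δ(f). Then δ(f) = 0 or δ(g) = 0. -/

import Mathlib

/-!
For a locally nilpotent derivation `δ`, every nonzero `x` has a degree: the largest `n` with
`δⁿ x ≠ 0`. In a domain of characteristic zero this degree is additive on products, since in the
Leibniz expansion of `δ^(m+n) (x * y)` only the term `(m+n).choose m • δᵐ x * δⁿ y` survives, and
`δ` lowers the degree of `x` by one when `δ x ≠ 0`. Hence `f ∣ δ g ≠ 0` forces
`deg f ≤ deg (δ g) < deg g`, and the two divisibilities together are contradictory.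
-/

open Finset

/-- A locally nilpotent derivation: every element is annihilated by some iterate. -/
def IsLND {k R : Type*} [CommRing k] [CommRing R] [Algebra k R]
    (δ : Derivation k R R) : Prop :=
  ∀ g : R, ∃ n : ℕ, ((δ.toLinearMap : Module.End k R) ^ n) g = 0

namespace Derivation

variable {k R : Type*} [CommRing k] [CommRing R] [Algebra k R] (δ : Derivation k R R)

theorem iterate_apply_mul (n : ℕ) (a b : R) :
    δ^[n] (a * b) = ∑ ij ∈ antidiagonal n, n.choose ij.1 • (δ^[ij.1] a * δ^[ij.2] b) := by
  induction n with
  | zero => simp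
  | succ n ih =>
    rw [sum_antidiagonal_choose_succ_nsmul (M := R) (fun i j => δ^[i] a * δ^[j] b) n]
    simp only [Function.iterate_succ_apply', ih, map_sum, map_nsmul, leibniz,
      smul_eq_mul, nsmul_add, sum_add_distrib]
    rw [add_right_inj]
    refine sum_congr rfl fun ⟨i, j⟩ hij ↦ ?_
    rw [n.choose_symm_of_eq_add (mem_antidiagonal.1 hij).symm, mul_comm]

theorem iterate_eq_zero_of_le {x : R} {m n : ℕ} (hmn : m ≤ n) (hx : δ^[m] x = 0) :
    δ^[n] x = 0 := by
  obtain ⟨c, rfl⟩ := Nat.exists_eq_add_of_le hmn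
  rw [add_comm, Function.iterate_add_apply, hx, iterate_map_zero]

/-- `δⁿ x` is the last nonzero iterate of `δ` at `x`; in particular `0` has no degree. -/
def HasDegree (x : R) (n : ℕ) : Prop := δ^[n] x ≠ 0 ∧ δ^[n + 1] x = 0

variable {δ}

theorem HasDegree.unique {x : R} {m n : ℕ} (hm : δ.HasDegree x m) (hn : δ.HasDegree x n) :
    m = n := by
  by_contra hne
  rcases Nat.lt_or_gt_of_ne hne with h | h
  · exact hn.1 (δ.iterate_eq_zero_of_le h hm.2)
  · exact hm.1 (δ.iterate_eq_zero_of_le h hn.2)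

theorem hasDegree_apply_iff {x : R} {n : ℕ} : δ.HasDegree (δ x) n ↔ δ.HasDegree x (n + 1) := by
  simp only [HasDegree, Function.iterate_succ_apply]

theorem exists_hasDegree (hδ : IsLND δ) {x : R} (hx : x ≠ 0) : ∃ n, δ.HasDegree x n := by
  classical
  have hex : ∃ n, δ^[n + 1] x = 0 := by
    obtain ⟨n, hn⟩ := hδ x
    exact ⟨n, δ.iterate_eq_zero_of_le n.le_succ (by simpa [Module.End.pow_apply] using hn)⟩
  refine ⟨Nat.find hex, ?_, Nat.find_spec hex⟩
  cases h : Nat.find hex with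
  | zero => simpa using hx
  | succ n => exact Nat.find_min hex (h ▸ n.lt_succ_self)

theorem HasDegree.mul [IsDomain R] [CharZero R] {x y : R} {m n : ℕ} (hx : δ.HasDegree x m)
    (hy : δ.HasDegree y n) : δ.HasDegree (x * y) (m + n) := by
  have hterm : ∀ i j, m < i ∨ n < j → δ^[i] x * δ^[j] y = 0 := by
    rintro i j (hi | hj)
    · rw [δ.iterate_eq_zero_of_le hi hx.2, zero_mul]
    · rw [δ.iterate_eq_zero_of_le hj hy.2, mul_zero]
  constructor
  · rw [iterate_apply_mul, sum_eq_single (m, n)]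
    · rw [nsmul_eq_mul]
      exact mul_ne_zero (Nat.cast_ne_zero.2 (Nat.choose_pos (by omega)).ne')
        (mul_ne_zero hx.1 hy.1)
    · rintro ⟨i, j⟩ hij hne
      have hij : i + j = m + n := mem_antidiagonal.1 hij
      rw [hterm i j (by grind), smul_zero]
    · simp
  · rw [iterate_apply_mul]
    refine sum_eq_zero fun ⟨i, j⟩ hij ↦ ?_
    have hij : i + j = m + n + 1 := mem_antidiagonal.1 hij
    rw [hterm i j (by omega), smul_zero]

theorem HasDegree.lt_of_dvd_apply [IsDomain R] [CharZero R] (hδ : IsLND δ) {f g : R} {m n : ℕ}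
    (hf : δ.HasDegree f m) (hg : δ.HasDegree g n) (hfg : f ∣ δ g) (hδg : δ g ≠ 0) : m < n := by
  obtain ⟨a, ha⟩ := hfg
  obtain ⟨l, hl⟩ := exists_hasDegree hδ (right_ne_zero_of_mul (ha ▸ hδg))
  have hg' : δ.HasDegree g (m + l + 1) := hasDegree_apply_iff.1 (ha ▸ hf.mul hl)
  have := hg.unique hg'
  omega

end Derivation

/-- If `δ` is a locally nilpotent derivation of a domain over a field of characteristic
zero and `f ∣ δ g`, `g ∣ δ f`, then `δ f = 0` or `δ g = 0`. -/
theorem stmt3 {k R : Type*} [Field k] [CharZero k] [CommRing R] [IsDomain R] [Algebra k R]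
    (δ : Derivation k R R) (hδ : IsLND δ)
    (f g : R) (hfg : f ∣ δ g) (hgf : g ∣ δ f) :
    δ f = 0 ∨ δ g = 0 := by
  have : CharZero R := charZero_of_injective_algebraMap (algebraMap k R).injective
  by_contra! h
  obtain ⟨hf, hg⟩ := h
  obtain ⟨m, hm⟩ := Derivation.exists_hasDegree hδ (ne_zero_of_dvd_ne_zero hg hfg)
  obtain ⟨n, hn⟩ := Derivation.exists_hasDegree hδ (ne_zero_of_dvd_ne_zero hf hgf)
  have hmn := hm.lt_of_dvd_apply hδ hn hfg hg
  have hnm := hn.lt_of_dvd_apply hδ hm hgf hf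
  omega
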